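/- For a Pauli channel N(ρ) = p_0 ρ + p_1 XρX + p_2 ZρZ + p_3 YρY with probabilities p_i summing to 1, the communication value is cv(N) = 2(p↓_1 + p↓_2), twice the sum of the two largest probabilities. -/

import Mathlib

open scoped BigOperators Kronecker ComplexOrder
open Matrix

noncomputable section

/-- A density operator: positive semidefinite with unit trace. -/
def IsDensity {ι : Type*} [Fintype ι] (ρ : Matrix ι ι ℂ) : Prop :=
  ρ.PosSemidef ∧ ρ.trace = 1

/-- A separable bipartite positive operator: a nonnegative combination of
tensor products of positive operators. -/
def IsSep {ιA ιB : Type*} [Fintype ιA] [Fintype ιB]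
    (Ω : Matrix (ιA × ιB) (ιA × ιB) ℂ) : Prop :=
  ∃ (n : ℕ) (a : Fin n → Matrix ιA ιA ℂ) (b : Fin n → Matrix ιB ιB ℂ),
    (∀ i, (a i).PosSemidef) ∧ (∀ i, (b i).PosSemidef) ∧
      Ω = ∑ i, a i ⊗ₖ b i

/-- Partial trace over the first (A) system. -/
def ptraceA {ιA ιB : Type*} [Fintype ιA]
    (Ω : Matrix (ιA × ιB) (ιA × ιB) ℂ) : Matrix ιB ιB ℂ :=
  Matrix.of fun k l => ∑ i, Ω (i, k) (i, l)

/-- The Choi matrix of a linear map on matrices. -/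
def choi {ιA ιB : Type*} [Fintype ιA] [DecidableEq ιA]
    (Φ : Matrix ιA ιA ℂ →ₗ[ℂ] Matrix ιB ιB ℂ) :
    Matrix (ιA × ιB) (ιA × ιB) ℂ :=
  Matrix.of fun p q => Φ (Matrix.single p.1 q.1 1) p.2 q.2

/-- A quantum channel: a completely positive (Choi matrix PSD) trace-preserving
linear map. -/
structure Channel (ιA ιB : Type*) [Fintype ιA] [DecidableEq ιA] [Fintype ιB] where
  map : Matrix ιA ιA ℂ →ₗ[ℂ] Matrix ιB ιB ℂ
  cp : (choi map).PosSemidef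
  tp : ∀ X, (map X).trace = X.trace

/-- The communication value, via the conic program over the separable cone:
`cv(N) = max { Tr[Ω J_N] : Ω separable, Tr_A Ω = I }`. -/
def cv {ιA ιB : Type*} [Fintype ιA] [DecidableEq ιA] [Fintype ιB] [DecidableEq ιB]
    (N : Channel ιA ιB) : ℝ :=
  sSup {r | ∃ Ω : Matrix (ιA × ιB) (ιA × ιB) ℂ,
    IsSep Ω ∧ ptraceA Ω = 1 ∧ r = ((Ω * choi N.map).trace).re}

/-- The operational communication value: supremum over finite families of input
states and POVMs of `∑_x Tr[Π_x N(ρ_x)]`. -/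
def cvOp {ιA ιB : Type*} [Fintype ιA] [DecidableEq ιA] [Fintype ιB] [DecidableEq ιB]
    (N : Channel ιA ιB) : ℝ :=
  sSup {r | ∃ (n : ℕ) (ρ : Fin n → Matrix ιA ιA ℂ) (E : Fin n → Matrix ιB ιB ℂ),
    (∀ x, IsDensity (ρ x)) ∧ (∀ x, (E x).PosSemidef) ∧ (∑ x, E x) = 1 ∧
      r = (∑ x, (E x * N.map (ρ x)).trace).re}

/-- Maximal overlap of a bipartite operator with product unit vectors
(`Λ²`, exponential of minus the geometric measure of entanglement). -/
def lam2 {ιA ιB : Type*} [Fintype ιA] [Fintype ιB]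
    (ω : Matrix (ιA × ιB) (ιA × ιB) ℂ) : ℝ :=
  sSup {r | ∃ (a : ιA → ℂ) (b : ιB → ℂ),
    (∑ i, ‖a i‖ ^ 2) = 1 ∧ (∑ k, ‖b k‖ ^ 2) = 1 ∧
      r = (star (fun p : ιA × ιB => a p.1 * b p.2) ⬝ᵥ
        ω *ᵥ fun p : ιA × ιB => a p.1 * b p.2).re}

end

/-- The gates of a Pauli channel, in the order `I, X, Z, Y`. -/
def pauliGate : Fin 4 → Matrix (Fin 2) (Fin 2) ℂ :=
  ![1, !![0, 1; 1, 0], !![1, 0; 0, -1], !![0, -Complex.I; Complex.I, 0]]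

/-! In Bloch coordinates `a = α I + u·σ`, `b = β I + v·σ`, the Choi functional of the Pauli
channel on a product operator is `Tr[(a ⊗ b) J_N] = 2 (α β + ∑ₖ cₖ uₖ vₖ)`, where the correlation
vector `c` has entries `±(2 (pᵢ + pⱼ) - 1)` over complementary pairs `{i, j}`. Positivity of
`a` and `b` means `|u| ≤ α` and `|v| ≤ β`, so by Cauchy–Schwarz each product term contributes at
most `(1 + maxₖ |cₖ|) / 2 · Tr[a ⊗ b]`, and the constraint `Tr_A Ω = I` fixes `Tr Ω = 2`. Hence
`cv(N) ≤ 1 + maxₖ |cₖ| = 2 (p↓₁ + p↓₂)`, and two antipodal pure states along the optimal Bloch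
axis on each side attain the bound. -/

open Complex

section ChoiMatrix

variable {ιA ιB : Type*} [Fintype ιA]

theorem ptraceA_add (Ω Ω' : Matrix (ιA × ιB) (ιA × ιB) ℂ) :
    ptraceA (Ω + Ω') = ptraceA Ω + ptraceA Ω' := by
  ext k l
  simp [ptraceA, Finset.sum_add_distrib]

theorem ptraceA_kronecker (a : Matrix ιA ιA ℂ) (b : Matrix ιB ιB ℂ) :
    ptraceA (a ⊗ₖ b) = a.trace • b := by
  ext k l
  simp [ptraceA, trace, Finset.sum_mul]

variable [Fintype ιB]

theorem trace_ptraceA (Ω : Matrix (ιA × ιB) (ιA × ιB) ℂ) : (ptraceA Ω).trace = Ω.trace := by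
  simp only [ptraceA, trace, diag, of_apply, Fintype.sum_prod_type]
  exact Finset.sum_comm

theorem re_trace_mul_le_of_isSep {X Ω : Matrix (ιA × ιB) (ιA × ιB) ℂ} {M : ℝ}
    (hX : ∀ a b, a.PosSemidef → b.PosSemidef →
      (((a ⊗ₖ b) * X).trace).re ≤ M * (a ⊗ₖ b).trace.re)
    (hΩ : IsSep Ω) : ((Ω * X).trace).re ≤ M * Ω.trace.re := by
  obtain ⟨n, a, b, ha, hb, rfl⟩ := hΩ
  simp only [Finset.sum_mul, trace_sum, re_sum, Finset.mul_sum]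
  exact Finset.sum_le_sum fun t _ => hX _ _ (ha t) (hb t)

theorem trace_kronecker_mul_choi [DecidableEq ιA] (Φ : Matrix ιA ιA ℂ →ₗ[ℂ] Matrix ιB ιB ℂ)
    (a : Matrix ιA ιA ℂ) (b : Matrix ιB ιB ℂ) :
    ((a ⊗ₖ b) * choi Φ).trace = (b * Φ aᵀ).trace := by
  have ha : aᵀ = ∑ i, ∑ j, a j i • single i j (1 : ℂ) := by
    conv_lhs => rw [matrix_eq_sum_single aᵀ]
    simp [smul_single]
  simp only [ha, map_sum, map_smul, trace, diag, mul_apply, Fintype.sum_prod_type,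
    kroneckerMap_apply, choi, of_apply, Matrix.sum_apply, Matrix.smul_apply, smul_eq_mul,
    Finset.mul_sum]
  rw [Finset.sum_comm]
  refine Finset.sum_congr rfl fun k _ => ?_
  rw [Finset.sum_comm, Finset.sum_comm (γ := ιB)]
  refine Finset.sum_congr rfl fun j _ => ?_
  rw [Finset.sum_comm]
  exact Finset.sum_congr rfl fun l _ => Finset.sum_congr rfl fun i _ => by ring

end ChoiMatrix

theorem sum_mul_mul_le_mul {ι : Type*} [Fintype ι] {c u v : ι → ℝ} {L α β : ℝ}
    (hc : ∀ k, |c k| ≤ L) (hL : 0 ≤ L) (hα : 0 ≤ α) (hβ : 0 ≤ β)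
    (hu : ∑ k, u k ^ 2 ≤ α ^ 2) (hv : ∑ k, v k ^ 2 ≤ β ^ 2) :
    ∑ k, c k * u k * v k ≤ L * (α * β) := by
  have hcs : (∑ k, |u k| * |v k|) ^ 2 ≤ (α * β) ^ 2 :=
    calc (∑ k, |u k| * |v k|) ^ 2 ≤ (∑ k, |u k| ^ 2) * ∑ k, |v k| ^ 2 :=
          Finset.sum_mul_sq_le_sq_mul_sq _ _ _
      _ ≤ α ^ 2 * β ^ 2 := by
          simp only [sq_abs]
          exact mul_le_mul hu hv (Finset.sum_nonneg fun k _ => sq_nonneg _) (sq_nonneg _)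
      _ = (α * β) ^ 2 := by ring
  calc ∑ k, c k * u k * v k ≤ ∑ k, L * (|u k| * |v k|) := by
        refine Finset.sum_le_sum fun k _ => ?_
        calc c k * u k * v k ≤ |c k * u k * v k| := le_abs_self _
          _ = |c k| * (|u k| * |v k|) := by rw [abs_mul, abs_mul, mul_assoc]
          _ ≤ L * (|u k| * |v k|) := by gcongr; exact hc k
    _ = L * ∑ k, |u k| * |v k| := by rw [Finset.mul_sum]
    _ ≤ L * (α * β) := by
        gcongr
        exact (abs_le_of_sq_le_sq' hcs (by positivity)).2

/-- `α I + u₀ X + u₁ Y + u₂ Z`. -/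
def blochMatrix (α : ℝ) (u : Fin 3 → ℝ) : Matrix (Fin 2) (Fin 2) ℂ :=
  !![α + u 2, u 0 - u 1 * I; u 0 + u 1 * I, α - u 2]

theorem trace_blochMatrix (α : ℝ) (u : Fin 3 → ℝ) : (blochMatrix α u).trace = 2 * α := by
  simp only [blochMatrix, trace_fin_two_of]
  ring

theorem det_blochMatrix (α : ℝ) (u : Fin 3 → ℝ) :
    (blochMatrix α u).det = α ^ 2 - ∑ k, u k ^ 2 := by
  simp only [blochMatrix, det_fin_two_of, Fin.sum_univ_three]
  push_cast
  ring_nf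
  simp only [I_sq]
  ring

theorem blochMatrix_add (α β : ℝ) (u v : Fin 3 → ℝ) :
    blochMatrix α u + blochMatrix β v = blochMatrix (α + β) (u + v) := by
  ext i j
  fin_cases i <;> fin_cases j <;> simp [blochMatrix] <;> ring

theorem blochMatrix_one_zero : blochMatrix 1 0 = 1 := by
  ext i j
  fin_cases i <;> fin_cases j <;> simp [blochMatrix]

theorem isHermitian_blochMatrix (α : ℝ) (u : Fin 3 → ℝ) : (blochMatrix α u).IsHermitian := by
  ext i j
  fin_cases i <;> fin_cases j <;> simp [blochMatrix, Complex.ext_iff]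

theorem Matrix.IsHermitian.exists_eq_blochMatrix {a : Matrix (Fin 2) (Fin 2) ℂ}
    (ha : a.IsHermitian) : ∃ α u, a = blochMatrix α u := by
  obtain ⟨r, s, z, rfl⟩ : ∃ (r s : ℝ) (z : ℂ), a = !![(r : ℂ), z; star z, s] :=
    ⟨_, _, _, by rw [eta_fin_two a, ← ha.apply 1 0, ← ha.coe_re_apply_self 0,
      ← ha.coe_re_apply_self 1]; rfl⟩
  refine ⟨(r + s) / 2, ![z.re, -z.im, (r - s) / 2], ?_⟩
  ext i j
  fin_cases i <;> fin_cases j <;> apply Complex.ext <;> simp [blochMatrix] <;> ring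

theorem posSemidef_blochMatrix {α : ℝ} {u : Fin 3 → ℝ} (hα : 0 ≤ α)
    (hu : ∑ k, u k ^ 2 ≤ α ^ 2) : (blochMatrix α u).PosSemidef := by
  refine .of_dotProduct_mulVec_nonneg (isHermitian_blochMatrix α u) fun x => ?_
  rw [Fin.sum_univ_three] at hu
  set a := (x 0).re
  set b := (x 0).im
  set c := (x 1).re
  set d := (x 1).im
  have hre : (star x ⬝ᵥ blochMatrix α u *ᵥ x).re = (α + u 2) * (a ^ 2 + b ^ 2)
      + (α - u 2) * (c ^ 2 + d ^ 2) + 2 * (u 0 * (a * c + b * d) + u 1 * (a * d - b * c)) := by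
    simp [blochMatrix, dotProduct, mulVec, Fin.sum_univ_two, a, b, c, d]
    ring
  have him : (star x ⬝ᵥ blochMatrix α u *ᵥ x).im = 0 := by
    simp [blochMatrix, dotProduct, mulVec, Fin.sum_univ_two]
    ring
  obtain ⟨hP, hQ⟩ : 0 ≤ α + u 2 ∧ 0 ≤ α - u 2 := by
    constructor <;> nlinarith [sq_nonneg (u 0), sq_nonneg (u 1)]
  -- `|2 Re(x̄₀ w x₁)| ≤ 2 |w| |x₀| |x₁| ≤ P |x₀|² + Q |x₁|²` for `w = u₀ - u₁ i`, `|w|² ≤ P Q`.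
  have hcs : (2 * (u 0 * (a * c + b * d) + u 1 * (a * d - b * c))) ^ 2
      ≤ ((α + u 2) * (a ^ 2 + b ^ 2) + (α - u 2) * (c ^ 2 + d ^ 2)) ^ 2 := by
    nlinarith [sq_nonneg (u 0 * (a * d - b * c) - u 1 * (a * c + b * d)),
      sq_nonneg ((α + u 2) * (a ^ 2 + b ^ 2) - (α - u 2) * (c ^ 2 + d ^ 2)),
      mul_nonneg (by linarith : 0 ≤ α ^ 2 - u 0 ^ 2 - u 1 ^ 2 - u 2 ^ 2)
        (mul_nonneg (add_nonneg (sq_nonneg a) (sq_nonneg b))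
          (add_nonneg (sq_nonneg c) (sq_nonneg d)))]
  have := (abs_le_of_sq_le_sq' hcs (by positivity)).1
  rw [Complex.nonneg_iff, hre, him]
  exact ⟨by linarith, rfl⟩

theorem posSemidef_blochMatrix_iff {α : ℝ} {u : Fin 3 → ℝ} :
    (blochMatrix α u).PosSemidef ↔ 0 ≤ α ∧ ∑ k, u k ^ 2 ≤ α ^ 2 := by
  refine ⟨fun h => ⟨?_, ?_⟩, fun h => posSemidef_blochMatrix h.1 h.2⟩
  · have := h.trace_nonneg
    rw [trace_blochMatrix, ← ofReal_ofNat, ← ofReal_mul, zero_le_real] at this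
    linarith
  · have := h.det_nonneg
    rw [det_blochMatrix] at this
    exact_mod_cast sub_nonneg.mp (zero_le_real.mp (by exact_mod_cast this))

section PauliChannel

variable (p : Fin 4 → ℝ)

/-- The diagonal of the correlation matrix of `J_N` in the coordinates of `blochMatrix`; the
sign of the `Y` entry is flipped by the transpose in `trace_kronecker_mul_choi`. -/
def pauliCorrelation : Fin 3 → ℝ :=
  ![p 0 + p 1 - p 2 - p 3, -p 0 + p 1 + p 2 - p 3, p 0 - p 1 + p 2 - p 3]

variable {p}

theorem abs_pauliCorrelation_le (hp : ∑ i, p i = 1) {M : ℝ}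
    (hM : ∀ i j, i ≠ j → p i + p j ≤ M) (k : Fin 3) : |pauliCorrelation p k| ≤ 2 * M - 1 := by
  rw [Fin.sum_univ_four] at hp
  refine abs_le.mpr ⟨?_, ?_⟩ <;> fin_cases k <;> simp [pauliCorrelation] <;>
    linarith [hM 0 1 (by decide), hM 0 2 (by decide), hM 0 3 (by decide),
      hM 1 2 (by decide), hM 1 3 (by decide), hM 2 3 (by decide)]

theorem exists_two_mul_add_eq_one_add_mul_pauliCorrelation (hp : ∑ i, p i = 1) {i j : Fin 4}
    (hij : i ≠ j) : ∃ k s, |s| ≤ 1 ∧ 2 * (p i + p j) = 1 + s * pauliCorrelation p k := by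
  rw [Fin.sum_univ_four] at hp
  fin_cases i <;> fin_cases j <;> first
    | exact absurd rfl hij
    | exact ⟨0, 1, by norm_num, by simp [pauliCorrelation]; linarith⟩
    | exact ⟨0, -1, by norm_num, by simp [pauliCorrelation]; linarith⟩
    | exact ⟨1, 1, by norm_num, by simp [pauliCorrelation]; linarith⟩
    | exact ⟨1, -1, by norm_num, by simp [pauliCorrelation]; linarith⟩
    | exact ⟨2, 1, by norm_num, by simp [pauliCorrelation]; linarith⟩
    | exact ⟨2, -1, by norm_num, by simp [pauliCorrelation]; linarith⟩

variable (hp : ∑ i, p i = 1) {Φ : Matrix (Fin 2) (Fin 2) ℂ →ₗ[ℂ] Matrix (Fin 2) (Fin 2) ℂ}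
  (hΦ : ∀ ρ, Φ ρ = ∑ i, (p i : ℂ) • (pauliGate i * ρ * pauliGate i))
include hp hΦ

theorem trace_blochMatrix_kronecker_mul_choi (α β : ℝ) (u v : Fin 3 → ℝ) :
    ((blochMatrix α u ⊗ₖ blochMatrix β v) * choi Φ).trace
      = ((2 * (α * β + ∑ k, pauliCorrelation p k * u k * v k) : ℝ) : ℂ) := by
  have hpC : ∑ i, (p i : ℂ) = 1 := by exact_mod_cast hp
  rw [Fin.sum_univ_four] at hpC
  rw [trace_kronecker_mul_choi, hΦ]
  simp only [trace_fin_two, mul_apply, Fin.sum_univ_two, Fin.sum_univ_four, Matrix.add_apply,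
    Matrix.smul_apply, transpose_apply, smul_eq_mul]
  simp [blochMatrix, pauliGate, pauliCorrelation, Fin.sum_univ_three]
  ring_nf
  simp only [I_sq, I_pow_four]
  linear_combination (2 * α * β : ℂ) * hpC

theorem re_trace_kronecker_mul_choi_le {M : ℝ} (hM : ∀ k, |pauliCorrelation p k| ≤ 2 * M - 1)
    {a b : Matrix (Fin 2) (Fin 2) ℂ} (ha : a.PosSemidef) (hb : b.PosSemidef) :
    (((a ⊗ₖ b) * choi Φ).trace).re ≤ M * (a ⊗ₖ b).trace.re := by
  obtain ⟨α, u, rfl⟩ := ha.isHermitian.exists_eq_blochMatrix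
  obtain ⟨β, v, rfl⟩ := hb.isHermitian.exists_eq_blochMatrix
  obtain ⟨hα, hu⟩ := posSemidef_blochMatrix_iff.mp ha
  obtain ⟨hβ, hv⟩ := posSemidef_blochMatrix_iff.mp hb
  have hcorr := sum_mul_mul_le_mul hM ((abs_nonneg _).trans (hM 0)) hα hβ hu hv
  rw [trace_blochMatrix_kronecker_mul_choi hp hΦ, trace_kronecker, trace_blochMatrix,
    trace_blochMatrix]
  norm_cast
  linarith

theorem exists_isSep_re_trace_mul_choi_eq (k : Fin 3) {s : ℝ} (hs : |s| ≤ 1) :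
    ∃ Ω, IsSep Ω ∧ ptraceA Ω = 1 ∧
      ((Ω * choi Φ).trace).re = 1 + s * pauliCorrelation p k := by
  set u : Fin 3 → ℝ := Pi.single k (1 / 2)
  have hpsd : ∀ t : ℝ, |t| ≤ 1 → (blochMatrix (1 / 2) (t • u)).PosSemidef := fun t ht => by
    refine posSemidef_blochMatrix (by norm_num) ?_
    have hu : ∑ j, (t • u) j ^ 2 = t ^ 2 / 4 := by
      simp [u, Pi.single_apply, mul_ite, ite_pow]
      ring
    rw [hu]
    nlinarith [abs_le.mp ht, sq_abs t]
  have hcorr : ∀ t t' : ℝ, ∑ j, pauliCorrelation p j * (t • u) j * (t' • u) j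
      = t * t' * pauliCorrelation p k / 4 := fun t t' => by
    simp [u, Pi.single_apply]
    ring
  set a : Fin 2 → Matrix (Fin 2) (Fin 2) ℂ :=
    ![blochMatrix (1 / 2) ((1 : ℝ) • u), blochMatrix (1 / 2) ((-1 : ℝ) • u)]
  set b : Fin 2 → Matrix (Fin 2) (Fin 2) ℂ :=
    ![blochMatrix (1 / 2) (s • u), blochMatrix (1 / 2) ((-s) • u)]
  refine ⟨a 0 ⊗ₖ b 0 + a 1 ⊗ₖ b 1, ⟨2, a, b, ?_, ?_, by simp [Fin.sum_univ_two]⟩, ?_, ?_⟩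
  · intro t; fin_cases t <;> exact hpsd _ (by simp)
  · intro t; fin_cases t <;> exact hpsd _ (by simp [hs])
  all_goals simp only [a, b, cons_val_zero, cons_val_one]
  · rw [ptraceA_add, ptraceA_kronecker, ptraceA_kronecker, trace_blochMatrix, trace_blochMatrix,
      ← blochMatrix_one_zero]
    norm_num [blochMatrix_add]
  · rw [add_mul, trace_add, trace_blochMatrix_kronecker_mul_choi hp hΦ,
      trace_blochMatrix_kronecker_mul_choi hp hΦ, ← ofReal_add, ofReal_re, hcorr, hcorr]
    ring

end PauliChannel

theorem cv_pauli_channel_general (p : Fin 4 → ℝ) (hp1 : ∑ i, p i = 1)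
    (N : Channel (Fin 2) (Fin 2))
    (hN : ∀ ρ : Matrix (Fin 2) (Fin 2) ℂ,
      N.map ρ = ∑ i, (p i : ℂ) • (pauliGate i * ρ * pauliGate i)) :
    cv N = 2 * sSup {s | ∃ i j : Fin 4, i ≠ j ∧ s = p i + p j} := by
  set S := {s | ∃ i j : Fin 4, i ≠ j ∧ s = p i + p j}
  have hS : S.Finite := (Set.finite_range fun ij : Fin 4 × Fin 4 => p ij.1 + p ij.2).subset <| by
    rintro s ⟨i, j, -, rfl⟩
    exact ⟨(i, j), rfl⟩
  have hne : S.Nonempty := ⟨p 0 + p 1, 0, 1, by decide, rfl⟩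
  obtain ⟨i, j, hij, hmax⟩ := hne.csSup_mem hS
  have hcorr := abs_pauliCorrelation_le hp1 fun i j hij => le_csSup hS.bddAbove ⟨i, j, hij, rfl⟩
  refine IsGreatest.csSup_eq ⟨?_, ?_⟩
  · obtain ⟨k, s, hs, hks⟩ := exists_two_mul_add_eq_one_add_mul_pauliCorrelation hp1 hij
    obtain ⟨Ω, hΩ, hpt, hval⟩ := exists_isSep_re_trace_mul_choi_eq hp1 hN k hs
    exact ⟨Ω, hΩ, hpt, by rw [hval, hmax, hks]⟩
  · rintro r ⟨Ω, hΩ, hpt, rfl⟩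
    have := re_trace_mul_le_of_isSep
      (fun a b ha hb => re_trace_kronecker_mul_choi_le hp1 hN hcorr ha hb) hΩ
    rw [← trace_ptraceA Ω, hpt, trace_one, Fintype.card_fin, Nat.cast_ofNat, re_ofNat] at this
    linarith

/-- The communication value of a Pauli channel
`N(ρ) = p₀ρ + p₁XρX + p₂ZρZ + p₃YρY` is twice the sum of its two largest
probabilities. -/
theorem cv_pauli_channel (p : Fin 4 → ℝ) (hp0 : ∀ i, 0 ≤ p i) (hp1 : ∑ i, p i = 1)
    (N : Channel (Fin 2) (Fin 2))
    (hN : ∀ ρ : Matrix (Fin 2) (Fin 2) ℂ,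
      N.map ρ = ∑ i, (p i : ℂ) • (pauliGate i * ρ * pauliGate i)) :
    cv N = 2 * sSup {s | ∃ i j : Fin 4, i ≠ j ∧ s = p i + p j} :=
  cv_pauli_channel_general p hp1 N hN
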